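/- Suppose the realizability constraint set Q⃗_ad is weak*-closed, and let d_{0,n} : X_{0,n} × Y_{0,n} → [0,∞] be measurable, nonnegative, with y^n ↦ d_{0,n}(x^n, y^n) continuous on Y_{0,n} for μ-almost all x^n, and d_{0,n} ∈ L_1(μ, BC(Y_{0,n})). For D ∈ [0,∞), if the set Q⃗_{0,n}(D) = { q ∈ Q⃗_ad : ∫_{X_{0,n}} ( ∫_{Y_{0,n}} d_{0,n}(x^n,y^n) q(dy^n; x^n) ) μ(dx^n) ≤ D } is nonempty, then Q⃗_{0,n}(D) is a weak*-closed subset of Q⃗_ad and hence weak*-compact. -/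

import Mathlib

open MeasureTheory ProbabilityTheory BoundedContinuousFunction
open scoped ENNReal

noncomputable section

/-- The source product space `X_{0,n}`. -/
abbrev Xn (X : ℕ → Type) (n : ℕ) := ∀ j : Fin (n + 1), X j

/-- The reconstruction product space `Y_{0,n}`. -/
abbrev Yn (Y : ℕ → Type) (n : ℕ) := ∀ j : Fin (n + 1), Y j

/-- The Banach space `L_1(μ, BC(Y_{0,n}))` of `μ`-integrable functions with values in the
Banach space `BC(Y_{0,n})` of bounded continuous real-valued functions on `Y_{0,n}`. -/
abbrev L1BC (X Y : ℕ → Type) (n : ℕ) [∀ i, MeasurableSpace (X i)]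
    [∀ i, TopologicalSpace (Y i)] (μ : Measure (Xn X n)) :=
  Lp (E := Yn Y n →ᵇ ℝ) 1 μ

/-- `L^w_∞(μ, M_rba(Y_{0,n}))`: the topological dual of `L_1(μ, BC(Y_{0,n}))`, equipped with
the weak* topology (by the duality theorem for the "lifting", this dual is isometrically
isomorphic to the space of weak*-measurable μ-essentially bounded `M_rba(Y_{0,n})`-valued
functions). -/
abbrev Lwinf (X Y : ℕ → Type) (n : ℕ) [∀ i, MeasurableSpace (X i)]
    [∀ i, TopologicalSpace (Y i)] (μ : Measure (Xn X n)) :=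
  WeakDual ℝ (L1BC X Y n μ)

variable {n : ℕ} {X Y : ℕ → Type}
  [∀ i, MeasurableSpace (X i)] [∀ i, TopologicalSpace (X i)]
  [∀ i, PolishSpace (X i)] [∀ i, BorelSpace (X i)]
  [∀ i, MeasurableSpace (Y i)] [∀ i, TopologicalSpace (Y i)]
  [∀ i, PolishSpace (Y i)] [∀ i, BorelSpace (Y i)]
  (μ : Measure (Xn X n)) [IsProbabilityMeasure μ]

/-- `Q_ad = L^w_∞(μ, Π_rba(Y_{0,n}))`: the elements of the dual corresponding to families of
regular bounded finitely additive *probability* measures on `Y_{0,n}`, i.e. the positive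
elements of total mass one. -/
def Qad : Set (Lwinf X Y n μ) :=
  {Q | (∀ φ : L1BC X Y n μ, (∀ᵐ x ∂μ, ∀ y, 0 ≤ φ x y) → 0 ≤ Q φ) ∧
       (∀ (φ : L1BC X Y n μ) (g : Xn X n → ℝ),
         (∀ᵐ x ∂μ, φ x = BoundedContinuousFunction.const (Yn Y n) (g x)) →
           Q φ = ∫ x, g x ∂μ)}

/-- Iterated convolution (composition) of a sequence of transition measures
`q i : (y^{i-1}, a) ↦ Measure (Y i)`, producing a measure on the product `∀ j : Fin (k+1), Y j`. -/
noncomputable def comp {Y : ℕ → Type*} [∀ i, MeasurableSpace (Y i)] {α : Type*} :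
    (k : ℕ) → (∀ i : Fin (k + 1), ((∀ j : Fin (i : ℕ), Y j) × α) → Measure (Y (i : ℕ))) →
      α → Measure (∀ j : Fin (k + 1), Y (j : ℕ))
  | 0, q, a => (q 0 (finZeroElim, a)).map (fun y => Fin.cons y finZeroElim)
  | (k + 1), q, a =>
      (comp k (fun i => q i.castSucc) a).bind
        (fun yk => (q (Fin.last (k + 1)) (yk, a)).map (Fin.snoc yk))

/-- `Q ∈ L^w_∞(μ, M_rba(Y_{0,n}))` is represented by the family of measures `K x`:
`Q(φ) = ∫ ( ∫ φ(x, y) K(dy; x) ) μ(dx)` for all `φ ∈ L_1(μ, BC(Y_{0,n}))`. -/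
def Represents (Q : Lwinf X Y n μ) (K : Xn X n → Measure (Yn Y n)) : Prop :=
  ∀ φ : L1BC X Y n μ, Q φ = ∫ x, ∫ y, φ x y ∂(K x) ∂μ

/-- The realizability constraint set `Q⃗_ad ⊆ Q_ad`: those elements represented (μ-a.s.) by a
causal product kernel `q(dy^n; x^n) = ⊗_{i=0}^n q_i(dy_i; y^{i-1}, x^i)`. -/
def vQad : Set (Lwinf X Y n μ) :=
  {Q | Q ∈ Qad μ ∧
    ∃ qi : ∀ i : Fin (n + 1),
        Kernel ((∀ j : Fin (i : ℕ), Y j) × (∀ j : Fin ((i : ℕ) + 1), X j)) (Y (i : ℕ)),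
      (∀ i, IsMarkovKernel (qi i)) ∧
        Represents μ Q
          (comp (α := Xn X n) n
            (fun i p => qi i (p.1, fun j => p.2 (Fin.castLE i.isLt j))))}

/-! The map `Q ↦ Q φ` is weak*-continuous, so the constraint set is the intersection of the
closed set `Q⃗_ad` with a closed half-space. Every element of `Q_ad` is a positive functional
sending constants to their integral; testing it against `‖ψ(x)‖ ± ψ(x, y) ≥ 0` shows it has
dual norm at most one. A closed subset of the dual unit ball is weak*-compact by Banach–Alaoglu. -/

namespace BoundedContinuousFunction

variable {β : Type*} [TopologicalSpace β]

lemma lipschitzWith_const_norm : LipschitzWith 1 fun f : β →ᵇ ℝ => const β ‖f‖ :=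
  LipschitzWith.of_dist_le_mul fun f g => by
    rw [NNReal.coe_one, one_mul, dist_eq_norm f g]
    exact ((dist_le dist_nonneg).2 fun _ => le_rfl).trans (dist_norm_norm_le f g)

end BoundedContinuousFunction

section DualNorm

open BoundedContinuousFunction

variable {α β : Type*} [MeasurableSpace α] [TopologicalSpace β] {μ : Measure α}

def normConstL1 (ψ : Lp (β →ᵇ ℝ) 1 μ) : Lp (β →ᵇ ℝ) 1 μ :=
  lipschitzWith_const_norm.compLp (by ext; simp) ψ

lemma coeFn_normConstL1 (ψ : Lp (β →ᵇ ℝ) 1 μ) :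
    normConstL1 ψ =ᵐ[μ] fun x => const β ‖ψ x‖ :=
  lipschitzWith_const_norm.coeFn_compLp _ ψ

lemma norm_le_one_of_nonneg_of_apply_const {Q : StrongDual ℝ (Lp (β →ᵇ ℝ) 1 μ)}
    (hpos : ∀ φ : Lp (β →ᵇ ℝ) 1 μ, (∀ᵐ x ∂μ, ∀ y, 0 ≤ φ x y) → 0 ≤ Q φ)
    (hconst : ∀ (φ : Lp (β →ᵇ ℝ) 1 μ) (g : α → ℝ),
      (∀ᵐ x ∂μ, φ x = const β (g x)) → Q φ = ∫ x, g x ∂μ) :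
    ‖Q‖ ≤ 1 := by
  refine Q.opNorm_le_bound zero_le_one fun ψ => ?_
  have hN : Q (normConstL1 ψ) = ‖ψ‖ := by
    rw [hconst _ (fun x => ‖ψ x‖) (coeFn_normConstL1 ψ), L1.norm_eq_integral_norm]
  have hsub : 0 ≤ Q (normConstL1 ψ - ψ) := by
    refine hpos _ ?_
    filter_upwards [Lp.coeFn_sub (normConstL1 ψ) ψ, coeFn_normConstL1 ψ] with x hx hNx y
    simp only [hx, hNx, Pi.sub_apply, BoundedContinuousFunction.sub_apply, const_apply, sub_nonneg]
    exact (abs_le.1 ((ψ x).norm_coe_le_norm y)).2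
  have hadd : 0 ≤ Q (normConstL1 ψ + ψ) := by
    refine hpos _ ?_
    filter_upwards [Lp.coeFn_add (normConstL1 ψ) ψ, coeFn_normConstL1 ψ] with x hx hNx y
    simp only [hx, hNx, Pi.add_apply, BoundedContinuousFunction.add_apply, const_apply,
      ← neg_le_iff_add_nonneg']
    exact (abs_le.1 ((ψ x).norm_coe_le_norm y)).1
  rw [map_sub] at hsub
  rw [map_add] at hadd
  rw [one_mul, Real.norm_eq_abs]
  exact abs_le.2 ⟨by linarith, by linarith⟩

end DualNorm

theorem causal_constraint_set_weakStar_closed_compact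
    (hclosed : IsClosed (vQad μ : Set (Lwinf X Y n μ)))
    (φ : L1BC X Y n μ)
    (D : ℝ) :
    IsClosed {Q : Lwinf X Y n μ | Q ∈ vQad μ ∧ Q φ ≤ D} ∧
    IsCompact {Q : Lwinf X Y n μ | Q ∈ vQad μ ∧ Q φ ≤ D} := by
  have hS : IsClosed {Q : Lwinf X Y n μ | Q ∈ vQad μ ∧ Q φ ≤ D} :=
    hclosed.inter (isClosed_Iic.preimage (WeakDual.eval_continuous φ))
  refine ⟨hS, (WeakDual.isCompact_closedBall 0 1).of_isClosed_subset hS fun Q hQ => ?_⟩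
  exact (mem_closedBall_zero_iff (a := WeakDual.toStrongDual Q)).2
    (norm_le_one_of_nonneg_of_apply_const hQ.1.1.1 hQ.1.1.2)
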